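/- Termination of the concrete garbage collection machine: for any finite store σ and any finite initial grey set G ⊆ dom(σ), the GC transition system ⟨G, B, σ⟩ ↦ ⟨(G ∪ LL(σ(a))) ∖ (B ∪ {a}), B ∪ {a}, σ⟩ (for a ∈ G) terminates in at most |dom(σ)| steps in a state with empty grey set, and the final black set B is exactly the set of addresses reachable from G via the live-locations function. -/

import Mathlib

/-!
Run the machine while maintaining an invariant on the state `(G, B)`: the grey set lies in the
domain and is disjoint from the black set, every live location of a black address is grey or
black, the initial grey set is covered by `G ∪ B`, and everything in `G ∪ B` is reachable.
Each step blackens a fresh address of the domain, so the machine stops after at most `|dom|`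
steps, and then the black set contains the initial set, is closed under live locations, and
consists of reachable addresses, i.e. it is exactly the reachable set.
-/

/-- Exactly-n-step iteration of a relation. -/
def StepN {α : Type _} (r : α → α → Prop) : ℕ → α → α → Prop
  | 0, a, b => a = b
  | n + 1, a, b => ∃ c, r a c ∧ StepN r n c b

/-- One step of the GC machine: pick a grey address `a`, blacken it, and add
    its live locations (minus the visited ones) to the grey set. -/
inductive GCStep {Addr Storable : Type} [DecidableEq Addr]
    (σ : Addr → Option Storable) (LL : Storable → Finset Addr) :
    Finset Addr × Finset Addr → Finset Addr × Finset Addr → Prop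
  | step {G B : Finset Addr} {a : Addr} {s : Storable} :
      a ∈ G → σ a = some s →
      GCStep σ LL (G, B) ((G ∪ LL s) \ (B ∪ {a}), B ∪ {a})

/-- Addresses reachable from `G` via the live-locations function: the least
    set containing `G` and closed under `a ↦ LL (σ a)`. -/
inductive GCReach {Addr Storable : Type}
    (σ : Addr → Option Storable) (LL : Storable → Finset Addr)
    (G : Finset Addr) : Addr → Prop
  | base {a : Addr} : a ∈ G → GCReach σ LL G a
  | step {a : Addr} {s : Storable} {b : Addr} :
      GCReach σ LL G a → σ a = some s → b ∈ LL s → GCReach σ LL G b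

namespace GCStep

variable {Addr : Type} [DecidableEq Addr]

theorem grey_union_black_eq {G B L : Finset Addr} {a : Addr} (ha : a ∈ G) :
    (G ∪ L) \ (B ∪ {a}) ∪ (B ∪ {a}) = G ∪ B ∪ L := by
  rw [Finset.sdiff_union_self_eq_union]
  grind

theorem card_sdiff_black_lt {dom B : Finset Addr} {a : Addr} (ha : a ∈ dom) (haB : a ∉ B) :
    (dom \ (B ∪ {a})).card < (dom \ B).card := by
  refine Finset.card_lt_card ⟨Finset.sdiff_subset_sdiff le_rfl Finset.subset_union_left, ?_⟩
  intro h
  simpa using h (Finset.mem_sdiff.mpr ⟨ha, haB⟩)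

end GCStep

section Invariant

variable {Addr Storable : Type} [DecidableEq Addr]
  (σ : Addr → Option Storable) (LL : Storable → Finset Addr)

structure GCInvariant (dom G₀ G B : Finset Addr) : Prop where
  grey_subset : G ⊆ dom
  disjoint : Disjoint G B
  black_closed : ∀ b ∈ B, ∀ s, σ b = some s → LL s ⊆ G ∪ B
  initial_subset : G₀ ⊆ G ∪ B
  reachable : ∀ a ∈ G ∪ B, GCReach σ LL G₀ a

variable {σ LL} {dom G₀ : Finset Addr}

theorem GCInvariant.init (hG₀ : G₀ ⊆ dom) : GCInvariant σ LL dom G₀ G₀ ∅ where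
  grey_subset := hG₀
  disjoint := Finset.disjoint_empty_right G₀
  black_closed := by simp
  initial_subset := by simp
  reachable _ ha := .base (by simpa using ha)

theorem GCInvariant.step (hclosed : ∀ a s, σ a = some s → LL s ⊆ dom)
    {G B : Finset Addr} (hinv : GCInvariant σ LL dom G₀ G B) {a : Addr} {s : Storable}
    (ha : a ∈ G) (hs : σ a = some s) :
    GCInvariant σ LL dom G₀ ((G ∪ LL s) \ (B ∪ {a})) (B ∪ {a}) := by
  have hunion := GCStep.grey_union_black_eq (B := B) (L := LL s) ha
  refine ⟨?_, Finset.sdiff_disjoint, ?_, ?_, ?_⟩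
  · exact Finset.sdiff_subset.trans (Finset.union_subset hinv.grey_subset (hclosed a s hs))
  · rw [hunion]
    rintro b hb t ht
    rcases Finset.mem_union.mp hb with hb | hb
    · exact (hinv.black_closed b hb t ht).trans Finset.subset_union_left
    · obtain rfl := Finset.mem_singleton.mp hb
      obtain rfl := Option.some_injective _ (hs.symm.trans ht)
      exact Finset.subset_union_right
  · rw [hunion]
    exact hinv.initial_subset.trans Finset.subset_union_left
  · rw [hunion]
    intro x hx
    rcases Finset.mem_union.mp hx with hx | hx
    · exact hinv.reachable x hx
    · exact .step (hinv.reachable a (Finset.mem_union_left _ ha)) hs hx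

theorem GCInvariant.exists_run (hdom : ∀ a ∈ dom, (σ a).isSome)
    (hclosed : ∀ a s, σ a = some s → LL s ⊆ dom) {G B : Finset Addr}
    (hinv : GCInvariant σ LL dom G₀ G B) :
    ∃ n ≤ (dom \ B).card, ∃ B' : Finset Addr,
      StepN (GCStep σ LL) n (G, B) (∅, B') ∧ GCInvariant σ LL dom G₀ ∅ B' := by
  induction hm : (dom \ B).card using Nat.strong_induction_on generalizing G B with
  | _ m ih =>
  rcases G.eq_empty_or_nonempty with rfl | ⟨a, ha⟩
  · exact ⟨0, Nat.zero_le _, B, rfl, hinv⟩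
  obtain ⟨s, hs⟩ := Option.isSome_iff_exists.mp (hdom a (hinv.grey_subset ha))
  have hlt := GCStep.card_sdiff_black_lt (hinv.grey_subset ha)
    (Finset.disjoint_left.mp hinv.disjoint ha)
  obtain ⟨n, hn, B', hrun, hinv'⟩ := ih _ (hm ▸ hlt) (hinv.step hclosed ha hs) rfl
  exact ⟨n + 1, by omega, B', ⟨_, .step ha hs, hrun⟩, hinv'⟩

theorem GCInvariant.mem_black_iff {B : Finset Addr} (hinv : GCInvariant σ LL dom G₀ ∅ B)
    (a : Addr) : a ∈ B ↔ GCReach σ LL G₀ a := by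
  obtain ⟨-, -, hclosed, hinit, hreach⟩ := hinv
  rw [Finset.empty_union] at hclosed hinit hreach
  refine ⟨hreach a, fun ha => ?_⟩
  induction ha with
  | base hb => exact hinit hb
  | step _ hs hb ih => exact hclosed _ ih _ hs hb

end Invariant

theorem gc_terminates {Addr Storable : Type} [DecidableEq Addr]
    (σ : Addr → Option Storable) (LL : Storable → Finset Addr)
    (dom : Finset Addr) (hdom : ∀ a, a ∈ dom ↔ (σ a).isSome)
    (hclosed : ∀ a s, σ a = some s → LL s ⊆ dom)
    (G : Finset Addr) (hG : G ⊆ dom) :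
    ∃ n ≤ dom.card, ∃ B : Finset Addr,
      StepN (GCStep σ LL) n (G, ∅) (∅, B) ∧
      ∀ a, a ∈ B ↔ GCReach σ LL G a := by
  obtain ⟨n, hn, B, hrun, hinv⟩ :=
    (GCInvariant.init (σ := σ) (LL := LL) hG).exists_run (fun a => (hdom a).mp) hclosed
  exact ⟨n, by simpa using hn, B, hrun, hinv.mem_black_iff⟩
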